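/- For every k ∈ ℕ and every z > 0, the Bessel polynomial q_k is related to the modified Bessel function of the second kind by exp(-z) · q_k(z) = (2^{1/2 - k} / Γ(k + 1/2)) · z^{k + 1/2} · K_{k+1/2}(z). -/

import Mathlib

/-- The Bessel polynomial `q_k(z) = ∑_{l=0}^k [C(k,l)/C(2k,l)] (2z)^l / l!`. -/
noncomputable def besselQ (k : ℕ) (z : ℝ) : ℝ :=
  ∑ l ∈ Finset.range (k + 1),
    ((k.choose l : ℝ) / ((2 * k).choose l : ℝ)) * (2 * z) ^ l / (Nat.factorial l : ℝ)

/-- The modified Bessel function of the second kind,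
`K_ν(z) = (1/2) ∫_0^∞ t^{ν-1} exp(-z(t + 1/t)/2) dt`. -/
noncomputable def besselK (ν z : ℝ) : ℝ :=
  (1 / 2) * ∫ t in Set.Ioi (0 : ℝ), t ^ (ν - 1) * Real.exp (-z * (t + 1 / t) / 2)

open Real MeasureTheory Set Filter Topology

/-!
Both sides satisfy the three-term recurrence `y_{k+2} = y_{k+1} + z² / ((2k+1)(2k+3)) y_k` and
agree for `k = 0, 1`. For the polynomials this is an identity between ratios of falling
factorials. For `K`, integrating the derivative of `t ^ ν * exp (-z (t + 1/t) / 2)` over `(0, ∞)`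
gives `K_{ν+1} = K_{ν-1} + (2ν/z) K_ν`; together with `K_{-ν} = K_ν` (substitute `t ↦ 1/t`) and
`K_{1/2}(z) = √(π/(2z)) e^{-z}` this yields the recurrence and initial values on the right.
-/

theorem integral_Ioi_of_hasDerivAt_of_tendsto_nhdsGT {E : Type*} [NormedAddCommGroup E]
    [NormedSpace ℝ E] [CompleteSpace E] {f f' : ℝ → E} {a : ℝ} {m n : E}
    (hderiv : ∀ x ∈ Ioi a, HasDerivAt f (f' x) x) (hint : IntegrableOn f' (Ioi a))
    (ha : Tendsto f (𝓝[>] a) (𝓝 m)) (htop : Tendsto f atTop (𝓝 n)) :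
    ∫ x in Ioi a, f' x = n - m := by
  have hb : a < a + 1 := lt_add_one a
  rw [← Ioc_union_Ioi_eq_Ioi hb.le, setIntegral_union (Ioc_disjoint_Ioi le_rfl) measurableSet_Ioi
      (hint.mono_set Ioc_subset_Ioi_self) (hint.mono_set (Ioi_subset_Ioi hb.le)),
    ← intervalIntegral.integral_of_le hb.le,
    intervalIntegral.integral_eq_sub_of_hasDerivAt_of_tendsto hb (fun x hx => hderiv x hx.1)
      ((intervalIntegrable_iff_integrableOn_Ioc_of_le hb.le).2 (hint.mono_set Ioc_subset_Ioi_self))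
      ha ((hderiv _ hb).continuousAt.tendsto.mono_left nhdsWithin_le_nhds),
    integral_Ioi_of_hasDerivAt_of_tendsto' (fun x hx => hderiv x (hb.trans_le hx))
      (hint.mono_set (Ioi_subset_Ioi hb.le)) htop]
  abel

lemma exp_neg_le_factorial_mul_inv_pow {x : ℝ} (hx : 0 < x) (n : ℕ) :
    exp (-x) ≤ n.factorial * (x ^ n)⁻¹ := by
  rw [exp_neg, ← div_eq_mul_inv, le_div_iff₀ (by positivity), inv_mul_le_iff₀ (exp_pos x),
    ← div_le_iff₀ (by positivity)]
  exact pow_div_factorial_le_exp _ hx.le n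

noncomputable def besselKIntegrand (ν z t : ℝ) : ℝ := t ^ (ν - 1) * exp (-z * (t + 1 / t) / 2)

lemma besselK_eq_integral (ν z : ℝ) :
    besselK ν z = 1 / 2 * ∫ t in Ioi 0, besselKIntegrand ν z t := rfl

/-- The factor `exp (-z / (2t))` beats any power of `t` at `0`, which leaves a `Γ`-integrand. -/
lemma besselKIntegrand_le {ν z t : ℝ} (hz : 0 < z) (ht : 0 < t) (n : ℕ) :
    besselKIntegrand ν z t
      ≤ n.factorial * (2 / z) ^ n * (t ^ (ν + n - 1) * exp (-(z / 2) * t)) := by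
  have hsplit : exp (-z * (t + 1 / t) / 2) = exp (-(z / 2) * t) * exp (-(z / (2 * t))) := by
    rw [← exp_add]; congr 1; field_simp; ring
  have hpow : t ^ (ν + n - 1) = t ^ (ν - 1) * t ^ n := by
    rw [show ν + n - 1 = ν - 1 + n by ring, rpow_add ht, rpow_natCast]
  calc besselKIntegrand ν z t
      = t ^ (ν - 1) * exp (-(z / 2) * t) * exp (-(z / (2 * t))) := by
        rw [besselKIntegrand, hsplit, mul_assoc]
    _ ≤ t ^ (ν - 1) * exp (-(z / 2) * t) * (n.factorial * ((z / (2 * t)) ^ n)⁻¹) := by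
        gcongr; exact exp_neg_le_factorial_mul_inv_pow (by positivity) n
    _ = n.factorial * (2 / z) ^ n * (t ^ (ν + n - 1) * exp (-(z / 2) * t)) := by
        rw [hpow, ← inv_pow, show (z / (2 * t))⁻¹ = 2 / z * t by field_simp, mul_pow]
        ring

lemma integrableOn_besselKIntegrand (ν : ℝ) {z : ℝ} (hz : 0 < z) :
    IntegrableOn (besselKIntegrand ν z) (Ioi 0) := by
  obtain ⟨n, hn⟩ := exists_nat_gt (-ν)
  have hdom := ((integrableOn_rpow_mul_exp_neg_mul_rpow (s := ν + n - 1) (p := 1) (by linarith)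
    one_pos (half_pos hz)).const_mul (n.factorial * (2 / z) ^ n))
  have hmeas : Measurable (besselKIntegrand ν z) := by unfold besselKIntegrand; fun_prop
  refine hdom.mono' hmeas.aestronglyMeasurable ?_
  filter_upwards [ae_restrict_mem measurableSet_Ioi] with t (ht : 0 < t)
  rw [norm_of_nonneg (by unfold besselKIntegrand; positivity), rpow_one]
  exact besselKIntegrand_le hz ht n

lemma besselKIntegrand_inv (μ z : ℝ) {t : ℝ} (ht : 0 < t) :
    besselKIntegrand μ z t⁻¹ = besselKIntegrand (2 - μ) z t := by
  rw [besselKIntegrand, besselKIntegrand, inv_rpow ht.le, ← rpow_neg ht.le, one_div, inv_inv,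
    add_comm t⁻¹ t]
  ring_nf

lemma integral_besselKIntegrand_neg (ν z : ℝ) :
    ∫ t in Ioi 0, besselKIntegrand (-ν) z t = ∫ t in Ioi 0, besselKIntegrand ν z t := by
  rw [← integral_comp_rpow_Ioi (besselKIntegrand ν z) (p := -1) (by norm_num)]
  refine setIntegral_congr_fun measurableSet_Ioi fun t (ht : 0 < t) => ?_
  rw [rpow_neg_one, besselKIntegrand_inv ν z ht, smul_eq_mul, besselKIntegrand, besselKIntegrand,
    abs_neg, abs_one, one_mul, ← mul_assoc, ← rpow_add ht]
  ring_nf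

lemma besselK_neg (ν z : ℝ) : besselK (-ν) z = besselK ν z := by
  rw [besselK_eq_integral, besselK_eq_integral, integral_besselKIntegrand_neg]

lemma hasDerivAt_besselKIntegrand_add_one (ν z : ℝ) {t : ℝ} (ht : 0 < t) :
    HasDerivAt (besselKIntegrand (ν + 1) z)
      (ν * besselKIntegrand ν z t - z / 2 * besselKIntegrand (ν + 1) z t
        + z / 2 * besselKIntegrand (ν - 1) z t) t := by
  have hpow : HasDerivAt (fun s : ℝ => s ^ (ν + 1 - 1)) (ν * t ^ (ν - 1)) t := by
    simpa using hasDerivAt_rpow_const (p := ν) (Or.inl ht.ne')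
  have hexp : HasDerivAt (fun s : ℝ => -z * (s + 1 / s) / 2) (-z * (1 - (t ^ 2)⁻¹) / 2) t := by
    simpa [one_div, sub_eq_add_neg] using
      (((hasDerivAt_id t).add (hasDerivAt_inv ht.ne')).const_mul (-z)).div_const 2
  refine (hpow.fun_mul hexp.exp).congr_deriv ?_
  have h2 : t ^ (ν - 1 - 1) = t ^ ν * (t ^ 2)⁻¹ := by
    rw [show ν - 1 - 1 = ν - (2 : ℕ) by push_cast; ring, rpow_sub ht, rpow_natCast,
      div_eq_mul_inv]
  simp only [besselKIntegrand, h2, add_sub_cancel_right]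
  ring

lemma tendsto_besselKIntegrand_atTop (μ : ℝ) {z : ℝ} (hz : 0 < z) :
    Tendsto (besselKIntegrand μ z) atTop (𝓝 0) := by
  refine tendsto_of_tendsto_of_tendsto_of_le_of_le' tendsto_const_nhds
    (tendsto_rpow_mul_exp_neg_mul_atTop_nhds_zero (μ - 1) (z / 2) (half_pos hz)) ?_ ?_
  · filter_upwards [eventually_gt_atTop 0] with t ht
    unfold besselKIntegrand; positivity
  · filter_upwards [eventually_gt_atTop 0] with t ht
    simpa using besselKIntegrand_le (ν := μ) hz ht 0

lemma tendsto_besselKIntegrand_nhdsGT_zero (μ : ℝ) {z : ℝ} (hz : 0 < z) :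
    Tendsto (besselKIntegrand μ z) (𝓝[>] 0) (𝓝 0) := by
  refine ((tendsto_besselKIntegrand_atTop (2 - μ) hz).comp tendsto_inv_nhdsGT_zero).congr' ?_
  filter_upwards [self_mem_nhdsWithin] with t (ht : 0 < t)
  rw [Function.comp_apply, besselKIntegrand_inv (2 - μ) z ht, sub_sub_cancel]

/-- Integrating the derivative of `t ^ ν * exp (-z (t + 1/t) / 2)` over `(0, ∞)`. -/
lemma besselK_add_one (ν : ℝ) {z : ℝ} (hz : 0 < z) :
    besselK (ν + 1) z = besselK (ν - 1) z + 2 * ν / z * besselK ν z := by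
  have hI := fun μ => integrableOn_besselKIntegrand μ hz
  have h₀ := (hI ν).const_mul ν
  have hsucc := (hI (ν + 1)).const_mul (z / 2)
  have hpred := (hI (ν - 1)).const_mul (z / 2)
  have hzero := integral_Ioi_of_hasDerivAt_of_tendsto_nhdsGT
    (fun t ht => hasDerivAt_besselKIntegrand_add_one ν z ht) ((h₀.sub' hsucc).fun_add hpred)
    (tendsto_besselKIntegrand_nhdsGT_zero _ hz) (tendsto_besselKIntegrand_atTop _ hz)
  rw [integral_add (h₀.sub' hsucc) hpred, integral_sub h₀ hsucc, integral_const_mul,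
    integral_const_mul, integral_const_mul, sub_zero] at hzero
  simp only [besselK_eq_integral]
  field_simp
  linear_combination (-2) * hzero

lemma hasDerivAt_sqrt_sub_inv_sqrt {t : ℝ} (ht : 0 < t) :
    HasDerivAt (fun s => √s - (√s)⁻¹) ((√t)⁻¹ * (1 + t⁻¹) / 2) t := by
  have hs : 0 < √t := sqrt_pos.2 ht
  have hsqrt := hasDerivAt_sqrt ht.ne'
  refine (hsqrt.sub (hsqrt.inv hs.ne')).congr_deriv ?_
  rw [sq_sqrt ht.le]
  field_simp
  ring

lemma strictMonoOn_sqrt_sub_inv_sqrt : StrictMonoOn (fun s => √s - (√s)⁻¹) (Ioi 0) := by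
  intro s (hs : 0 < s) t _ hst
  have hlt : √s < √t := sqrt_lt_sqrt hs.le hst
  have hinv : (√t)⁻¹ < (√s)⁻¹ := inv_strictAnti₀ (sqrt_pos.2 hs) hlt
  simp only
  linarith

lemma image_sqrt_sub_inv_sqrt : (fun s => √s - (√s)⁻¹) '' Ioi 0 = univ := by
  refine eq_univ_of_forall fun v => ?_
  set r := √(v ^ 2 + 4)
  have hr : r ^ 2 = v ^ 2 + 4 := sq_sqrt (by positivity)
  obtain ⟨hrv, -⟩ := abs_lt.1 (abs_lt_of_sq_lt_sq (by linarith) (sqrt_nonneg _))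
  have hs : 0 < (v + r) / 2 := by linarith
  have hs' : v + r ≠ 0 := by linarith
  refine ⟨((v + r) / 2) ^ 2, pow_pos hs 2, ?_⟩
  simp only [sqrt_sq hs.le]
  field_simp
  linear_combination hr

/-- The substitution `v = √t - 1/√t` turns `K_{1/2} + K_{-1/2}` into a Gaussian integral. -/
lemma besselK_one_half {z : ℝ} (hz : 0 < z) :
    besselK (1 / 2) z = √(π / (2 * z)) * exp (-z) := by
  set g : ℝ → ℝ := fun v => exp (-z) * exp (-(z / 2) * v ^ 2)
  have hchange := integral_image_eq_integral_abs_deriv_smul measurableSet_Ioi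
    (fun t ht => (hasDerivAt_sqrt_sub_inv_sqrt ht).hasDerivWithinAt)
    strictMonoOn_sqrt_sub_inv_sqrt.injOn g
  rw [image_sqrt_sub_inv_sqrt, Measure.restrict_univ, integral_const_mul, integral_gaussian]
    at hchange
  have hintegrand : ∀ t ∈ Ioi (0 : ℝ),
      |(√t)⁻¹ * (1 + t⁻¹) / 2| • g (√t - (√t)⁻¹)
      = (besselKIntegrand (1 / 2) z t + besselKIntegrand (-(1 / 2)) z t) / 2 := by
    intro t (ht : 0 < t)
    have hs : 0 < √t := sqrt_pos.2 ht
    have hpow₁ : t ^ ((1 : ℝ) / 2 - 1) = (√t)⁻¹ := by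
      rw [sqrt_eq_rpow, ← rpow_neg ht.le]; norm_num
    have hpow₂ : t ^ (-((1 : ℝ) / 2) - 1) = (√t)⁻¹ * t⁻¹ := by
      rw [← hpow₁, ← rpow_neg_one, ← rpow_add ht]; norm_num
    have hexp :
        exp (-z) * exp (-(z / 2) * (√t - (√t)⁻¹) ^ 2) = exp (-z * (t + 1 / t) / 2) := by
      rw [← exp_add]
      congr 1
      field_simp
      rw [sq_sqrt ht.le]
      ring
    dsimp only [g]
    rw [abs_of_pos (by positivity), smul_eq_mul, hexp, besselKIntegrand, besselKIntegrand, hpow₁,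
      hpow₂]
    ring
  have hsum : besselK (1 / 2) z + besselK (-(1 / 2)) z = exp (-z) * √(π / (z / 2)) := by
    rw [besselK_eq_integral, besselK_eq_integral, hchange,
      setIntegral_congr_fun measurableSet_Ioi hintegrand, integral_div,
      integral_add (integrableOn_besselKIntegrand _ hz) (integrableOn_besselKIntegrand _ hz)]
    ring
  have hsqrt : √(π / (z / 2)) = 2 * √(π / (2 * z)) := by
    rw [show π / (z / 2) = 2 ^ 2 * (π / (2 * z)) by field_simp, sqrt_mul (by norm_num),
      sqrt_sq (by norm_num)]
  rw [besselK_neg, hsqrt] at hsum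
  linarith

noncomputable def besselQCoeff (k l : ℕ) : ℝ :=
  (k.choose l : ℝ) / ((2 * k).choose l : ℝ) * 2 ^ l / (l.factorial : ℝ)

lemma besselQ_eq_sum (k : ℕ) (z : ℝ) :
    besselQ k z = ∑ l ∈ Finset.range (k + 1), besselQCoeff k l * z ^ l := by
  refine Finset.sum_congr rfl fun l _ => ?_
  rw [besselQCoeff, mul_pow]
  ring

lemma choose_div_choose_eq_descFactorial_div_descFactorial (a b l : ℕ) :
    (a.choose l : ℝ) / (b.choose l : ℝ)
      = (a.descFactorial l : ℝ) / (b.descFactorial l : ℝ) := by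
  simp only [Nat.descFactorial_eq_factorial_mul_choose, Nat.cast_mul]
  rw [mul_div_mul_left _ _ (by positivity)]

lemma besselQCoeff_add_two {k l : ℕ} (hl : l ≤ k) :
    besselQCoeff (k + 2) (l + 2)
      = besselQCoeff (k + 1) (l + 2) + besselQCoeff k l / ((2 * k + 1) * (2 * k + 3)) := by
  simp only [besselQCoeff, choose_div_choose_eq_descFactorial_div_descFactorial,
    show 2 * (k + 2) = (2 * k + 2) + 2 by ring, show 2 * (k + 1) = 2 * k + 2 by ring]
  have hA₂ : ((k + 2).descFactorial (l + 2) : ℝ) = (k + 2) * (k + 1) * k.descFactorial l := by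
    rw [Nat.succ_descFactorial_succ, Nat.succ_descFactorial_succ]; push_cast; ring
  have hA₁ : ((k + 1).descFactorial (l + 2) : ℝ) = (k + 1) * (k - l) * k.descFactorial l := by
    rw [Nat.succ_descFactorial_succ, Nat.descFactorial_succ]; push_cast [Nat.cast_sub hl]; ring
  have hB₂ : ((2 * k + 2 + 2).descFactorial (l + 2) : ℝ)
      = (2 * k + 4) * (2 * k + 3) * (2 * k + 2).descFactorial l := by
    rw [Nat.succ_descFactorial_succ, Nat.succ_descFactorial_succ]; push_cast; ring
  have hB₁ : ((2 * k + 2).descFactorial (l + 2) : ℝ)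
      = (2 * k + 2) * (2 * k + 1) * (2 * k).descFactorial l := by
    rw [Nat.succ_descFactorial_succ, Nat.succ_descFactorial_succ]; push_cast; ring
  have hB₁' : ((2 * k + 2).descFactorial (l + 2) : ℝ)
      = (2 * k + 2 - l) * (2 * k + 1 - l) * (2 * k + 2).descFactorial l := by
    rw [Nat.descFactorial_succ, Nat.descFactorial_succ, Nat.cast_mul, Nat.cast_mul,
      Nat.cast_sub (by omega), Nat.cast_sub (by omega)]
    push_cast
    ring
  have hfac : ((l + 2).factorial : ℝ) = (l + 2) * (l + 1) * l.factorial := by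
    rw [Nat.factorial_succ, Nat.factorial_succ]; push_cast; ring
  have hB : (0 : ℝ) < (2 * k).descFactorial l := by
    exact_mod_cast Nat.descFactorial_pos.2 (by omega)
  have hkl : (0 : ℝ) < 2 * k + 1 - l := by
    have : (l : ℝ) ≤ k := by exact_mod_cast hl
    linarith
  have hB' : ((2 * k + 2).descFactorial l : ℝ)
      = (2 * k + 2) * (2 * k + 1) * (2 * k).descFactorial l
        / ((2 * k + 2 - l) * (2 * k + 1 - l)) := by
    rw [eq_div_iff (mul_ne_zero (by linarith) hkl.ne'), ← hB₁, hB₁']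
    ring
  rw [hA₂, hA₁, hB₂, hB₁, hB', hfac]
  field_simp
  ring

lemma besselQCoeff_zero (k : ℕ) : besselQCoeff k 0 = 1 := by
  simp [besselQCoeff]

lemma besselQCoeff_one {k : ℕ} (hk : k ≠ 0) : besselQCoeff k 1 = 1 := by
  simp only [besselQCoeff, Nat.choose_one_right, pow_one, Nat.factorial_one, Nat.cast_one, div_one]
  push_cast
  field_simp

lemma besselQCoeff_eq_zero_of_lt {k l : ℕ} (h : k < l) : besselQCoeff k l = 0 := by
  simp [besselQCoeff, Nat.choose_eq_zero_of_lt h]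

lemma besselQ_add_two (k : ℕ) (z : ℝ) :
    besselQ (k + 2) z
      = besselQ (k + 1) z + z ^ 2 / ((2 * k + 1) * (2 * k + 3)) * besselQ k z := by
  have hext :
      besselQ (k + 1) z = ∑ l ∈ Finset.range (k + 2 + 1), besselQCoeff (k + 1) l * z ^ l := by
    rw [besselQ_eq_sum, Finset.sum_range_succ _ (k + 2), besselQCoeff_eq_zero_of_lt (by omega),
      zero_mul, add_zero]
  have hterm : ∀ l ∈ Finset.range (k + 1), besselQCoeff (k + 2) (l + 1 + 1) * z ^ (l + 1 + 1)
      = besselQCoeff (k + 1) (l + 1 + 1) * z ^ (l + 1 + 1)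
        + z ^ 2 / ((2 * k + 1) * (2 * k + 3)) * (besselQCoeff k l * z ^ l) := by
    intro l hl
    rw [besselQCoeff_add_two (Nat.lt_succ_iff.1 (Finset.mem_range.1 hl))]
    ring
  rw [besselQ_eq_sum, besselQ_eq_sum k, hext, Finset.sum_range_succ', Finset.sum_range_succ',
    Finset.sum_range_succ' _ (k + 2), Finset.sum_range_succ' _ (k + 1),
    Finset.sum_congr rfl hterm, Finset.sum_add_distrib, ← Finset.mul_sum]
  simp only [besselQCoeff_zero, besselQCoeff_one (Nat.succ_ne_zero _)]
  ring

lemma besselQ_zero (z : ℝ) : besselQ 0 z = 1 := by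
  simp [besselQ]

lemma besselQ_one (z : ℝ) : besselQ 1 z = 1 + z := by
  rw [besselQ_eq_sum, Finset.sum_range_succ, Finset.sum_range_one, besselQCoeff_zero,
    besselQCoeff_one one_ne_zero]
  ring

noncomputable def reducedBesselK (ν z : ℝ) : ℝ :=
  (2 : ℝ) ^ ((1 : ℝ) / 2 - ν) / Gamma (ν + 1 / 2) * z ^ (ν + 1 / 2) * besselK (ν + 1 / 2) z

lemma reducedBesselK_zero {z : ℝ} (hz : 0 < z) : reducedBesselK 0 z = exp (-z) := by
  rw [reducedBesselK, zero_add, sub_zero, Gamma_one_half_eq, besselK_one_half hz,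
    ← sqrt_eq_rpow, ← sqrt_eq_rpow, sqrt_div pi_pos.le, sqrt_mul zero_le_two]
  have := sqrt_pos.2 hz
  have := sqrt_pos.2 pi_pos
  field_simp

lemma reducedBesselK_one {z : ℝ} (hz : 0 < z) : reducedBesselK 1 z = exp (-z) * (1 + z) := by
  have hK : besselK (1 + 1 / 2) z = (1 + 1 / z) * besselK (1 / 2) z := by
    rw [add_comm, besselK_add_one (1 / 2) hz, show (1 : ℝ) / 2 - 1 = -(1 / 2) by norm_num,
      besselK_neg]
    ring
  have hΓ : Gamma (1 + 1 / 2) = √π / 2 := by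
    rw [add_comm, Gamma_add_one (by norm_num), Gamma_one_half_eq]; ring
  have h2 : (2 : ℝ) ^ ((1 : ℝ) / 2 - 1) = √2 / 2 := by
    rw [sub_eq_add_neg, rpow_add two_pos, rpow_neg_one, ← sqrt_eq_rpow, div_eq_mul_inv]
  have hz' : z ^ ((1 : ℝ) + 1 / 2) = z * √z := by
    rw [rpow_add hz, rpow_one, ← sqrt_eq_rpow]
  rw [reducedBesselK, hK, hΓ, h2, hz', besselK_one_half hz, sqrt_div pi_pos.le,
    sqrt_mul zero_le_two]
  have := sqrt_pos.2 hz
  have := sqrt_pos.2 pi_pos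
  field_simp
  ring

lemma reducedBesselK_add_two {ν z : ℝ} (hν : 0 < ν + 1 / 2) (hz : 0 < z) :
    reducedBesselK (ν + 2) z
      = reducedBesselK (ν + 1) z
        + z ^ 2 / ((2 * ν + 1) * (2 * ν + 3)) * reducedBesselK ν z := by
  have hK : besselK (ν + 2 + 1 / 2) z
      = besselK (ν + 1 / 2) z + (2 * ν + 3) / z * besselK (ν + 1 + 1 / 2) z := by
    rw [show ν + 2 + 1 / 2 = ν + 3 / 2 + 1 by ring, besselK_add_one (ν + 3 / 2) hz]
    ring_nf
  have hΓ₁ : Gamma (ν + 1 + 1 / 2) = (2 * ν + 1) / 2 * Gamma (ν + 1 / 2) := by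
    rw [show ν + 1 + 1 / 2 = ν + 1 / 2 + 1 by ring, Gamma_add_one hν.ne']
    ring
  have hΓ₂ :
      Gamma (ν + 2 + 1 / 2) = (2 * ν + 3) / 2 * ((2 * ν + 1) / 2 * Gamma (ν + 1 / 2)) := by
    rw [show ν + 2 + 1 / 2 = ν + 1 + 1 / 2 + 1 by ring, Gamma_add_one (by linarith), hΓ₁]
    ring
  have hz₁ : z ^ (ν + 1 + 1 / 2) = z * z ^ (ν + 1 / 2) := by
    rw [show ν + 1 + 1 / 2 = 1 + (ν + 1 / 2) by ring, rpow_add hz, rpow_one]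
  have hz₂ : z ^ (ν + 2 + 1 / 2) = z ^ 2 * z ^ (ν + 1 / 2) := by
    rw [show ν + 2 + 1 / 2 = (2 : ℕ) + (ν + 1 / 2) by push_cast; ring, rpow_add hz,
      rpow_natCast]
  have h2₁ : (2 : ℝ) ^ ((1 : ℝ) / 2 - (ν + 1)) = 2 ^ ((1 : ℝ) / 2 - ν) / 2 := by
    rw [show (1 : ℝ) / 2 - (ν + 1) = 1 / 2 - ν - 1 by ring, rpow_sub_one two_ne_zero]
  have h2₂ : (2 : ℝ) ^ ((1 : ℝ) / 2 - (ν + 2)) = 2 ^ ((1 : ℝ) / 2 - ν) / 4 := by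
    rw [show (1 : ℝ) / 2 - (ν + 2) = 1 / 2 - ν - 2 by ring, rpow_sub two_pos, rpow_two]
    norm_num
  have hΓ := (Gamma_pos_of_pos hν).ne'
  have h₁ : 2 * ν + 1 ≠ 0 := by linarith
  have h₃ : 2 * ν + 3 ≠ 0 := by linarith
  rw [reducedBesselK, reducedBesselK, reducedBesselK, hK, hΓ₁, hΓ₂, hz₁, hz₂, h2₁, h2₂]
  field_simp
  ring

theorem exp_neg_mul_besselQ (k : ℕ) {z : ℝ} (hz : 0 < z) :
    exp (-z) * besselQ k z = reducedBesselK k z := by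
  induction k using Nat.twoStepInduction with
  | zero => rw [besselQ_zero, mul_one, Nat.cast_zero, reducedBesselK_zero hz]
  | one => rw [besselQ_one, Nat.cast_one, reducedBesselK_one hz]
  | more n ih₀ ih₁ =>
    push_cast at ih₁ ⊢
    rw [besselQ_add_two, reducedBesselK_add_two (by positivity) hz, ← ih₀, ← ih₁]
    ring

theorem stmt_7 (k : ℕ) (z : ℝ) (hz : 0 < z) :
    Real.exp (-z) * besselQ k z =
      (2 : ℝ) ^ ((1 : ℝ) / 2 - k) / Real.Gamma ((k : ℝ) + 1 / 2) *
        z ^ ((k : ℝ) + 1 / 2) * besselK ((k : ℝ) + 1 / 2) z :=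
  exp_neg_mul_besselQ k hz
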